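/- arXiv:1610.09234 — 3 statements merged into one kernel-verified Lean document; each statement's English description precedes it below -/
import Mathlib

section
/- Let f : [0,∞) → ℝ be convex and continuous, let f'(∞) := sup_{s>0} f'₊(s), and let β < f'(∞), κ > 0 and s₀ > 0 be given. Then there exists δ ∈ (0, 1/s₀) such that f(0) + β·s − κ < f(s) for every s ≥ 0 with s < δ, and also for every s > 1/δ. -/
/-!
Near `0` the claim is continuity of `f` at `0`. Near `∞`, pick `u > 0` with `β < f'₊(u)`:
by convexity `f` lies above its right tangent line at `u`, whose slope beats `β`, so
`f(s) - β s → ∞`. Both conditions hold for all sufficiently small `δ > 0`, as does `δ < 1/s₀`.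
-/

/-- The right derivative `f'₊(s)` of `f` at `s`. -/
noncomputable def rderiv (f : ℝ → ℝ) (s : ℝ) : ℝ := derivWithin f (Set.Ioi s) s

/-- `f'(∞) := sup_{s > 0} f'₊(s)` as an extended real number in `(−∞, ∞]`. -/
noncomputable def slopeSupE (f : ℝ → ℝ) : EReal :=
  ⨆ u : {u : ℝ // 0 < u}, ((rderiv f u : ℝ) : EReal)

open Set Filter Topology

theorem ContinuousWithinAt.eventually_affine_sub_lt {f : ℝ → ℝ} {S : Set ℝ} {a : ℝ}
    (hf : ContinuousWithinAt f S a) (β : ℝ) {κ : ℝ} (hκ : 0 < κ) :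
    ∀ᶠ s in 𝓝[S] a, f a + β * (s - a) - κ < f s := by
  have hg : ContinuousWithinAt (fun s ↦ f s - β * (s - a)) S a := by fun_prop
  filter_upwards [hg.eventually_const_lt (u := f a - κ) (by simpa using hκ)] with s hs
  linarith

theorem ConvexOn.add_mul_sub_le_of_lt {f : ℝ → ℝ} (hf : ConvexOn ℝ (Ici 0) f) {u s : ℝ}
    (hu : 0 < u) (hus : u < s) : f u + rderiv f u * (s - u) ≤ f s := by
  have h := hf.rightDeriv_le_slope_of_mem_interior (by rwa [interior_Ici]) (hu.trans hus).le hus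
  rw [slope_def_field, le_div_iff₀ (sub_pos.2 hus)] at h
  unfold rderiv
  linarith

theorem ConvexOn.eventually_affine_lt_of_lt_slopeSupE {f : ℝ → ℝ} (hf : ConvexOn ℝ (Ici 0) f)
    {β : ℝ} (hβ : (β : EReal) < slopeSupE f) (c : ℝ) :
    ∀ᶠ s in atTop, c + β * s < f s := by
  obtain ⟨⟨u, hu⟩, hβu⟩ := lt_iSup_iff.mp hβ
  have hβm : β < rderiv f u := by exact_mod_cast hβu
  have hgap : Tendsto (fun s ↦ (rderiv f u - β) * s + (f u - rderiv f u * u - c)) atTop atTop :=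
    tendsto_atTop_add_const_right _ _ (tendsto_id.const_mul_atTop (sub_pos.2 hβm))
  filter_upwards [hgap.eventually_gt_atTop 0, eventually_gt_atTop u] with s hs hus
  linarith [hf.add_mul_sub_le_of_lt hu hus]

theorem Filter.Eventually.nhdsGT_forall_Ico {P : ℝ → Prop} {a : ℝ} (h : ∀ᶠ s in 𝓝[≥] a, P s) :
    ∀ᶠ δ in 𝓝[>] a, ∀ s, a ≤ s → s < δ → P s := by
  obtain ⟨b, hab, hb⟩ := mem_nhdsGE_iff_exists_Ico_subset.mp h
  filter_upwards [Ioo_mem_nhdsGT hab] with δ hδ s has hsδ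
  exact hb ⟨has, hsδ.trans_le hδ.2.le⟩

theorem Filter.Eventually.nhdsGT_zero_forall_one_div_lt {P : ℝ → Prop} (h : ∀ᶠ s in atTop, P s) :
    ∀ᶠ δ in 𝓝[>] 0, ∀ s, 1 / δ < s → P s := by
  obtain ⟨T, hT⟩ := eventually_atTop.mp h
  filter_upwards [tendsto_inv_nhdsGT_zero.eventually_ge_atTop T] with δ hδ s hs
  exact hT s (by rw [one_div] at hs; linarith)

/-- For `f : [0,∞) → ℝ` convex and continuous, `β < f'(∞)`, `κ > 0` and
`s₀ > 0`, there exists `δ ∈ (0, 1/s₀)` such that `f(0) + β·s − κ < f(s)` for every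
`s ∈ [0, δ)` and for every `s > 1/δ`. -/
theorem exists_delta_of_slope_lt (f : ℝ → ℝ) (hconv : ConvexOn ℝ (Set.Ici 0) f)
    (hcont : ContinuousOn f (Set.Ici 0)) (β κ s₀ : ℝ)
    (hβ : (β : EReal) < slopeSupE f) (hκ : 0 < κ) (hs₀ : 0 < s₀) :
    ∃ δ : ℝ, 0 < δ ∧ δ < 1 / s₀ ∧
      (∀ s : ℝ, 0 ≤ s → s < δ → f 0 + β * s - κ < f s) ∧
      (∀ s : ℝ, 1 / δ < s → f 0 + β * s - κ < f s) := by
  have hnear : ∀ᶠ s in 𝓝[≥] 0, f 0 + β * s - κ < f s := by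
    simpa using (hcont 0 self_mem_Ici).eventually_affine_sub_lt β hκ
  have hfar : ∀ᶠ s in atTop, f 0 + β * s - κ < f s := by
    simpa [add_sub_right_comm] using hconv.eventually_affine_lt_of_lt_slopeSupE hβ (f 0 - κ)
  have hsmall : ∀ᶠ δ in 𝓝[>] (0 : ℝ), δ < 1 / s₀ :=
    nhdsWithin_le_nhds (eventually_lt_nhds (by positivity))
  exact (eventually_mem_nhdsWithin.and <| hsmall.and <|
    hnear.nhdsGT_forall_Ico.and hfar.nhdsGT_zero_forall_one_div_lt).exists
end

section
/- For every 𝕋 ∈ 𝒯⁽ⁿ⁾ there exists exactly one probability measure Q on σ(ζ_1,…,ζ_n) that is absolutely continuous with respect to P, makes (S⁽ⁿ⁾_{τ_k})_{k=0,…,n} a martingale with respect to (𝓕⁽ⁿ⁾_{τ_k})_{k=0,…,n}, and gives full measure to the set of scenarios in which, for every k with τ_k < 1, the increments ζ_i for nτ_k < i ≤ nτ_{k+1} are either all +1 or all −1 (including when τ_{k+1} = 1). -/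
open MeasureTheory Set

/-- The sample space `Ω = {−1,+1}^ℕ`, coded as sequences of Booleans. -/
abbrev BinOmega := ℕ → Bool

/-- The coordinate maps `ζ_i`, valued in `{−1, +1}`. -/
noncomputable def zeta (i : ℕ) (ω : BinOmega) : ℝ := if ω i then 1 else -1

/-- The σ-algebra `σ(ζ_1, …, ζ_k)` generated by the first `k` coin tosses. -/
def coordMS (k : ℕ) : MeasurableSpace BinOmega :=
  ⨆ i ∈ Finset.Icc 1 k, MeasurableSpace.comap (fun ω => ω i) inferInstance

lemma coordMS_mono : Monotone coordMS := fun k l hkl =>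
  biSup_mono fun i hi => by
    simp only [Finset.mem_Icc] at hi ⊢
    exact ⟨hi.1, hi.2.trans hkl⟩

lemma coordMS_le (k : ℕ) : coordMS k ≤ (inferInstance : MeasurableSpace BinOmega) :=
  iSup₂_le fun i _ => (measurable_pi_apply i).comap_le

/-- The discrete filtration `(σ(ζ_1, …, ζ_k))_{k ∈ ℕ}`. -/
def coordFilt : Filtration ℕ (inferInstance : MeasurableSpace BinOmega) where
  seq := coordMS
  mono' := coordMS_mono
  le' := coordMS_le

/-- The `n`-period binomial price after `k` steps:
`s₀ · exp((σ/√n) Σ_{i=1}^k ζ_i)`. -/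
noncomputable def binSd (n : ℕ) (σ s₀ : ℝ) (k : ℕ) (ω : BinOmega) : ℝ :=
  s₀ * Real.exp ((σ / Real.sqrt n) * ∑ i ∈ Finset.Icc 1 k, zeta i ω)

/-- The `n`-period binomial price process `S⁽ⁿ⁾_t`, `t ∈ [0,1]`. -/
noncomputable def binS (n : ℕ) (σ s₀ : ℝ) (t : ℝ) (ω : BinOmega) : ℝ :=
  binSd n σ s₀ ⌊(n : ℝ) * t⌋₊ ω

/-- The filtration `(𝓕⁽ⁿ⁾_t)_{t}` generated by the binomial price process:
`𝓕⁽ⁿ⁾_t = σ(ζ_1, …, ζ_{⌊nt⌋})`. -/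
noncomputable def binFilt (n : ℕ) : Filtration ℝ (inferInstance : MeasurableSpace BinOmega) where
  seq t := coordMS ⌊(n : ℝ) * t⌋₊
  mono' := fun s t hst => coordMS_mono (Nat.floor_le_floor
    (mul_le_mul_of_nonneg_left hst (by positivity)))
  le' := fun t => coordMS_le _

/-- `P` is the fair-coin measure: the coordinates `(ζ_i)_{i ≥ 1}` are i.i.d. with
`P[ζ_i = 1] = 1/2`. -/
def IsFairCoin (P : Measure BinOmega) : Prop :=
  IsProbabilityMeasure P ∧
    ∀ (s : Finset ℕ) (b : ℕ → Bool), (∀ i ∈ s, 1 ≤ i) →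
      P {ω | ∀ i ∈ s, ω i = b i} = (1 / 2 : ENNReal) ^ s.card

/-- The coin tosses `ζ_i`, `a < i ≤ b`, are all `+1` or all `−1`. -/
def MonotoneRun (a b : ℕ) (ω : BinOmega) : Prop :=
  (∀ i, a < i → i ≤ b → ω i = true) ∨ (∀ i, a < i → i ≤ b → ω i = false)

/-- A stopping system `𝕋 ∈ 𝒯⁽ⁿ⁾`: stopping times `0 = τ_0 ≤ τ_1 ≤ ⋯ ≤ τ_n = 1` with values
in `{0, 1/n, …, 1}` (coded in units of time steps, i.e. valued in `{0, 1, …, n}`) such that on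
`{τ_{k+1} < 1}` the increments between `τ_k` and `τ_{k+1}` are all `+1` or all `−1`. -/
structure BinStopSystem (n : ℕ) where
  τ : ℕ → BinOmega → ℕ
  zero : ∀ ω, τ 0 ω = 0
  mono : ∀ k ω, τ k ω ≤ τ (k + 1) ω
  le_n : ∀ k ω, τ k ω ≤ n
  top : ∀ ω, τ n ω = n
  stopping : ∀ k, IsStoppingTime coordFilt (fun ω => ((τ k ω : ℕ) : WithTop ℕ))
  run : ∀ k ω, τ (k + 1) ω < n → MonotoneRun (τ k ω) (τ (k + 1) ω) ω

/-- `N(𝕋)`, the number of interventions: `sup {k : τ_k < 1}`. -/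
noncomputable def numStops (n : ℕ) (T : BinStopSystem n) (ω : BinOmega) : ℕ :=
  sSup {k : ℕ | T.τ k ω < n}

/-- `Q` is the measure `Q(𝕋)` associated with the stopping system `𝕋`: a probability measure,
absolutely continuous with respect to `P`, under which `(S⁽ⁿ⁾_{τ_k})_k` is a martingale with
respect to `(𝓕⁽ⁿ⁾_{τ_k})_k`, and which only charges scenarios in which, for every `k` with
`τ_k < 1`, the price moves strictly monotonically between `τ_k` and `τ_{k+1}` (also when
`τ_{k+1} = 1`). -/
def IsQMeasure (n : ℕ) (σ s₀ : ℝ) (P Q : Measure BinOmega) (T : BinStopSystem n) : Prop :=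
  IsProbabilityMeasure Q ∧ Q ≪ P ∧
    (∀ᵐ ω ∂Q, ∀ k, T.τ k ω < n → MonotoneRun (T.τ k ω) (T.τ (k + 1) ω) ω) ∧
    ∀ k, Q[(fun ω => binSd n σ s₀ (T.τ (k + 1) ω) ω) | (T.stopping k).measurableSpace]
          =ᵐ[Q] fun ω => binSd n σ s₀ (T.τ k ω) ω

/-!
Everything in the statement depends only on the first `n` tosses, so a measure `Q ≪ P` on
`σ(ζ_1, …, ζ_n)` is a weight function on the `2ⁿ` paths of length `n`, and `𝓕_{τ_k}` is atomic:
an atom fixes the path up to `τ_k`. On an atom where `τ_{k+1} > τ_k`, the support condition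
leaves two ways to go on, a run of `+1`s or a run of `−1`s up to `τ_{k+1}`, and they multiply the
price by factors `u > 1 > d`. The martingale condition on the atom then forces the conditional
probabilities `(1 - d) / (u - d)` and `(u - 1) / (u - d)` of the two runs. By induction on `k`, the
mass of every atom, and finally of every path, is a product of such probabilities; conversely,
this product is the density of a measure with all the required properties.
-/

lemma Finset.sum_eq_sum_of_forall_sum_class_eq {α M : Type*} [DecidableEq α] [AddCommMonoid M]
    (c : α → Finset α) (hc : ∀ a, a ∈ c a) (hc' : ∀ a b, b ∈ c a → c b = c a)
    {s : Finset α} (hs : ∀ a ∈ s, c a ⊆ s) {f g : α → M}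
    (h : ∀ a, ∑ x ∈ c a, f x = ∑ x ∈ c a, g x) : ∑ x ∈ s, f x = ∑ x ∈ s, g x := by
  have hs' : s = (s.image c).biUnion id := by
    ext x
    simp only [Finset.mem_biUnion, Finset.mem_image, id, exists_exists_and_eq_and]
    exact ⟨fun hx => ⟨x, hx, hc x⟩, fun ⟨a, ha, hx⟩ => hs a ha hx⟩
  have hdisj : (↑(s.image c) : Set (Finset α)).PairwiseDisjoint id := by
    rintro _ ha _ hb hab
    obtain ⟨a, -, rfl⟩ := Finset.mem_image.1 ha
    obtain ⟨b, -, rfl⟩ := Finset.mem_image.1 hb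
    refine Finset.disjoint_left.2 fun x hxa hxb => hab ?_
    exact (hc' a x hxa).symm.trans (hc' b x hxb)
  rw [hs', Finset.sum_biUnion hdisj, Finset.sum_biUnion hdisj]
  refine Finset.sum_congr rfl fun _ ht => ?_
  obtain ⟨a, -, rfl⟩ := Finset.mem_image.1 ht
  exact h a

/-- The risk-neutral probabilities of a one-step move of the price by the factor `F v`. -/
noncomputable def martingaleProb (F : Bool → ℝ) (v : Bool) : ℝ :=
  (1 - F !v) / (F v - F !v)

section martingaleProb

variable {F : Bool → ℝ}

lemma sum_martingaleProb (hF : F false ≠ F true) : ∑ v, martingaleProb F v = 1 := by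
  have h₁ : F true - F false ≠ 0 := sub_ne_zero.2 hF.symm
  have h₂ : F false - F true ≠ 0 := sub_ne_zero.2 hF
  simp only [Fintype.sum_bool, martingaleProb, Bool.not_true, Bool.not_false]
  field_simp
  ring

lemma sum_martingaleProb_mul (hF : F false ≠ F true) : ∑ v, martingaleProb F v * F v = 1 := by
  have h₁ : F true - F false ≠ 0 := sub_ne_zero.2 hF.symm
  have h₂ : F false - F true ≠ 0 := sub_ne_zero.2 hF
  simp only [Fintype.sum_bool, martingaleProb, Bool.not_true, Bool.not_false]
  field_simp
  ring

lemma eq_martingaleProb_mul (hF : F false ≠ F true) {x : Bool → ℝ} {t : ℝ}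
    (hx : ∑ v, x v = t) (hxF : ∑ v, x v * F v = t) (v : Bool) :
    x v = martingaleProb F v * t := by
  have h₁ : F true - F false ≠ 0 := sub_ne_zero.2 hF.symm
  have h₂ : F false - F true ≠ 0 := sub_ne_zero.2 hF
  simp only [Fintype.sum_bool] at hx hxF
  cases v <;> simp only [martingaleProb, Bool.not_true, Bool.not_false] <;> field_simp
  · linear_combination hxF - F true * hx
  · linear_combination hxF - F false * hx

lemma martingaleProb_nonneg (h0 : F false ≤ 1) (h1 : 1 ≤ F true) (hF : F false < F true)
    (v : Bool) : 0 ≤ martingaleProb F v := by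
  cases v
  · exact div_nonneg_of_nonpos (by simpa using h1) (by simpa using hF.le)
  · exact div_nonneg (by simpa using h0) (by simpa using hF.le)

end martingaleProb

abbrev CoinPath (n : ℕ) := Finset.Icc 1 n → Bool

namespace CoinPath

variable {n : ℕ}

def restr (n : ℕ) (ω : BinOmega) : CoinPath n := fun i => ω i

def lift (n : ℕ) (p : CoinPath n) : BinOmega := fun j =>
  if h : j ∈ Finset.Icc 1 n then p ⟨j, h⟩ else false

@[simp] lemma restr_lift (p : CoinPath n) : restr n (lift n p) = p :=
  funext fun i => dif_pos i.2

lemma lift_restr {j : ℕ} (hj : j ∈ Finset.Icc 1 n) (ω : BinOmega) :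
    lift n (restr n ω) j = ω j :=
  dif_pos hj

lemma measurable_restr : Measurable (restr n) :=
  measurable_pi_lambda _ fun _ => measurable_pi_apply _

def AgreeUpTo (a : ℕ) (p p' : CoinPath n) : Prop :=
  ∀ i : Finset.Icc 1 n, (i : ℕ) ≤ a → p i = p' i

def RunsOn (a b : ℕ) (v : Bool) (p : CoinPath n) : Prop :=
  ∀ i : Finset.Icc 1 n, a < (i : ℕ) → (i : ℕ) ≤ b → p i = v

instance {a : ℕ} {p p' : CoinPath n} : Decidable (AgreeUpTo a p p') := by
  unfold AgreeUpTo; infer_instance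

instance {a b : ℕ} {v : Bool} {p : CoinPath n} : Decidable (RunsOn a b v p) := by
  unfold RunsOn; infer_instance

def pad (a : ℕ) (v : Bool) (p : CoinPath n) : CoinPath n :=
  fun i => if (i : ℕ) ≤ a then p i else v

lemma AgreeUpTo.symm {a : ℕ} {p p' : CoinPath n} (h : AgreeUpTo a p p') : AgreeUpTo a p' p :=
  fun i hi => (h i hi).symm

lemma AgreeUpTo.trans {a : ℕ} {p p' p'' : CoinPath n} (h : AgreeUpTo a p p')
    (h' : AgreeUpTo a p' p'') : AgreeUpTo a p p'' :=
  fun i hi => (h i hi).trans (h' i hi)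

lemma AgreeUpTo.mono {a b : ℕ} {p p' : CoinPath n} (h : AgreeUpTo b p p') (hab : a ≤ b) :
    AgreeUpTo a p p' :=
  fun i hi => h i (hi.trans hab)

lemma agreeUpTo_pad (a : ℕ) (v : Bool) (p : CoinPath n) : AgreeUpTo a (pad a v p) p :=
  fun _ hi => if_pos hi

lemma AgreeUpTo.eq {p p' : CoinPath n} (h : AgreeUpTo n p p') : p = p' :=
  funext fun i => h i (Finset.mem_Icc.1 i.2).2

lemma runsOn_of_le {a b : ℕ} (v : Bool) (p : CoinPath n) (h : b ≤ a) : RunsOn a b v p :=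
  fun _ h₁ h₂ => absurd (h₁.trans_le h₂) h.not_gt

lemma runsOn_congr {a b : ℕ} {v : Bool} {p p' : CoinPath n} (h : AgreeUpTo b p p') :
    RunsOn a b v p ↔ RunsOn a b v p' := by
  refine ⟨fun hp i h₁ h₂ => ?_, fun hp' i h₁ h₂ => ?_⟩
  · rw [← h i h₂]; exact hp i h₁ h₂
  · rw [h i h₂]; exact hp' i h₁ h₂

lemma eq_of_runsOn {a b : ℕ} {v v' : Bool} {p : CoinPath n} (hab : a < b) (hb : b ≤ n)
    (h : RunsOn a b v p) (h' : RunsOn a b v' p) : v = v' := by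
  have hi : a + 1 ∈ Finset.Icc 1 n := Finset.mem_Icc.2 ⟨by omega, by omega⟩
  exact (h ⟨a + 1, hi⟩ (by simp) (by simp; omega)).symm.trans
    (h' ⟨a + 1, hi⟩ (by simp) (by simp; omega))

lemma lift_congr {a i : ℕ} {p p' : CoinPath n} (h : AgreeUpTo a p p') (hi : i ≤ a) :
    lift n p i = lift n p' i := by
  unfold lift
  split_ifs with hmem
  · exact h ⟨i, hmem⟩ hi
  · rfl

lemma lift_of_runsOn {a b i : ℕ} {v : Bool} {p : CoinPath n} (h : RunsOn a b v p) (hb : b ≤ n)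
    (h₁ : a < i) (h₂ : i ≤ b) : lift n p i = v :=
  (dif_pos (Finset.mem_Icc.2 ⟨by omega, by omega⟩)).trans (h _ h₁ h₂)

lemma binSd_lift_congr (σ s₀ : ℝ) {a m : ℕ} {p p' : CoinPath n} (h : AgreeUpTo a p p')
    (hm : m ≤ a) : binSd n σ s₀ m (lift n p) = binSd n σ s₀ m (lift n p') := by
  unfold binSd zeta
  congr 3
  refine Finset.sum_congr rfl fun i hi => ?_
  rw [lift_congr h ((Finset.mem_Icc.1 hi).2.trans hm)]

lemma binSd_lift_of_runsOn (σ s₀ : ℝ) {a b : ℕ} {v : Bool} {p : CoinPath n}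
    (h : RunsOn a b v p) (hab : a ≤ b) (hb : b ≤ n) :
    binSd n σ s₀ b (lift n p) = binSd n σ s₀ a (lift n p) *
      Real.exp (σ / √n * (((b - a : ℕ) : ℝ) * if v then 1 else -1)) := by
  have hrun : ∑ i ∈ Finset.Ioc a b, zeta i (lift n p) =
      ((b - a : ℕ) : ℝ) * if v then 1 else -1 := by
    rw [Finset.sum_congr rfl fun i hi => by
      rw [zeta, lift_of_runsOn h hb (Finset.mem_Ioc.1 hi).1 (Finset.mem_Ioc.1 hi).2],
      Finset.sum_const, Nat.card_Ioc, nsmul_eq_mul]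
  have hsplit : Finset.Icc 1 b = Finset.Ioc 0 b := rfl
  unfold binSd
  rw [mul_assoc, ← Real.exp_add, ← mul_add, ← hrun, hsplit,
    show Finset.Icc 1 a = Finset.Ioc 0 a from rfl, Finset.sum_Ioc_consecutive _ (Nat.zero_le a) hab]

lemma coordMS_eq_comap (m : ℕ) : coordMS m = MeasurableSpace.comap (restr m) inferInstance := by
  rw [show (inferInstance : MeasurableSpace (CoinPath m)) = MeasurableSpace.pi from rfl,
    MeasurableSpace.pi, MeasurableSpace.comap_iSup, iSup_subtype]
  simp_rw [MeasurableSpace.comap_comp]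
  rfl

lemma measurableSet_coordMS_iff {m : ℕ} {s : Set BinOmega} :
    MeasurableSet[coordMS m] s ↔ ∃ A : Set (CoinPath m), restr m ⁻¹' A = s := by
  rw [coordMS_eq_comap, MeasurableSpace.measurableSet_comap]
  exact ⟨fun ⟨A, _, h⟩ => ⟨A, h⟩, fun ⟨A, h⟩ => ⟨A, .of_discrete, h⟩⟩

lemma mem_of_measurableSet_coordMS {m : ℕ} {s : Set BinOmega} (hs : MeasurableSet[coordMS m] s)
    {ω ω' : BinOmega} (h : ∀ i ∈ Finset.Icc 1 m, ω' i = ω i) (hω : ω ∈ s) : ω' ∈ s := by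
  obtain ⟨A, rfl⟩ := measurableSet_coordMS_iff.1 hs
  have : restr m ω' = restr m ω := funext fun i => h i i.2
  rwa [Set.mem_preimage, this]

lemma measurable_coord {m i : ℕ} (hi : i ∈ Finset.Icc 1 m) :
    Measurable[coordMS m] fun ω : BinOmega => ω i :=
  Measurable.of_comap_le (le_iSup₂ (f := fun i (_ : i ∈ Finset.Icc 1 m) =>
    MeasurableSpace.comap (fun ω : BinOmega => ω i) inferInstance) i hi)

lemma eq_of_isStoppingTime {τ : BinOmega → ℕ}
    (hτ : IsStoppingTime coordFilt fun ω => ((τ ω : ℕ) : WithTop ℕ)) {ω ω' : BinOmega}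
    (h : ∀ i ∈ Finset.Icc 1 (τ ω), ω' i = ω i) : τ ω' = τ ω := by
  have hle {x y : BinOmega} (hxy : ∀ i ∈ Finset.Icc 1 (τ x), y i = x i) : τ y ≤ τ x := by
    have hmeas : MeasurableSet[coordMS (τ x)] {z | τ z ≤ τ x} := by
      have := hτ (τ x)
      simp only [Nat.cast_withTop, WithTop.coe_le_coe] at this
      exact this
    exact mem_of_measurableSet_coordMS hmeas hxy (le_refl (τ x))
  have h' := hle h
  refine le_antisymm h' (hle fun i hi => (h i ?_).symm)
  exact Finset.mem_Icc.2 ⟨(Finset.mem_Icc.1 hi).1, (Finset.mem_Icc.1 hi).2.trans h'⟩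

lemma binSd_lift_restr (σ s₀ : ℝ) {m : ℕ} (hm : m ≤ n) (ω : BinOmega) :
    binSd n σ s₀ m (lift n (restr n ω)) = binSd n σ s₀ m ω := by
  unfold binSd zeta
  congr 3
  refine Finset.sum_congr rfl fun i hi => ?_
  rw [lift_restr (Finset.mem_Icc.2 ⟨(Finset.mem_Icc.1 hi).1, (Finset.mem_Icc.1 hi).2.trans hm⟩)]

lemma forall_eq_iff_runsOn {a b : ℕ} (hb : b ≤ n) (v : Bool) (ω : BinOmega) :
    (∀ i, a < i → i ≤ b → ω i = v) ↔ RunsOn a b v (restr n ω) :=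
  ⟨fun h i h₁ h₂ => h i h₁ h₂,
    fun h i h₁ h₂ => h ⟨i, Finset.mem_Icc.2 ⟨by omega, h₂.trans hb⟩⟩ h₁ h₂⟩

lemma monotoneRun_iff {a b : ℕ} (hb : b ≤ n) (ω : BinOmega) :
    MonotoneRun a b ω ↔ ∃ v, RunsOn a b v (restr n ω) := by
  rw [MonotoneRun, forall_eq_iff_runsOn hb, forall_eq_iff_runsOn hb, Bool.exists_bool, or_comm]

lemma setIntegral_preimage_restr (Q : Measure BinOmega) [IsFiniteMeasure Q]
    (A : Finset (CoinPath n)) (H : CoinPath n → ℝ) :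
    ∫ ω in restr n ⁻¹' A, H (restr n ω) ∂Q = ∑ p ∈ A, (Q.map (restr n)).real {p} * H p := by
  rw [← setIntegral_map .of_discrete (Integrable.of_finite).aestronglyMeasurable
    measurable_restr.aemeasurable, setIntegral_finset A Integrable.of_finite.integrableOn]
  rfl

lemma measurable_binSd (σ s₀ : ℝ) (j : ℕ) : Measurable[coordMS j] (binSd n σ s₀ j) := by
  have hsum : Measurable[coordMS j] fun ω => ∑ i ∈ Finset.Icc 1 j, zeta i ω :=
    Finset.measurable_sum _ fun i hi =>
      (measurable_from_top (f := fun b : Bool => if b then (1 : ℝ) else -1)).comp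
        (measurable_coord hi)
  exact (Real.measurable_exp.comp (hsum.const_mul _)).const_mul s₀

lemma measure_preimage_restr_singleton {P : Measure BinOmega} (hP : IsFairCoin P)
    (p : CoinPath n) : P (restr n ⁻¹' {p}) = (1 / 2) ^ n := by
  have h := hP.2 (Finset.Icc 1 n) (lift n p) fun i hi => (Finset.mem_Icc.1 hi).1
  rw [Nat.card_Icc, Nat.add_sub_cancel] at h
  convert h using 2
  ext ω
  simp only [Set.mem_preimage, Set.mem_singleton_iff, funext_iff, Subtype.forall,
    Set.mem_ofPred_eq]
  exact forall₂_congr fun i hi => by rw [lift, dif_pos hi]; rfl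

end CoinPath

structure PathStopSystem (n : ℕ) where
  τ : ℕ → CoinPath n → ℕ
  zero : ∀ p, τ 0 p = 0
  mono : ∀ k p, τ k p ≤ τ (k + 1) p
  le_n : ∀ k p, τ k p ≤ n
  top : ∀ p, τ n p = n
  eq_of_agreeUpTo : ∀ k p p', CoinPath.AgreeUpTo (τ k p) p p' → τ k p' = τ k p

namespace PathStopSystem

open CoinPath

variable {n : ℕ} (S : PathStopSystem n) {j k : ℕ} {r p : CoinPath n}

lemma τ_mono (h : j ≤ k) (p : CoinPath n) : S.τ j p ≤ S.τ k p :=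
  monotone_nat_of_le_succ (fun k => S.mono k p) h

lemma τ_of_le (h : n ≤ k) (p : CoinPath n) : S.τ k p = n :=
  le_antisymm (S.le_n k p) ((S.top p).symm.le.trans (S.τ_mono h p))

/-- The atom of `𝓕_{τ_k}` containing `r`. -/
def atom (k : ℕ) (r : CoinPath n) : Finset (CoinPath n) :=
  {p | AgreeUpTo (S.τ k r) p r}

lemma mem_atom : p ∈ S.atom k r ↔ AgreeUpTo (S.τ k r) p r := by
  simp [atom]

lemma self_mem_atom (k : ℕ) (r : CoinPath n) : r ∈ S.atom k r :=
  S.mem_atom.2 fun _ _ => rfl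

lemma τ_eq_of_mem_atom (hj : j ≤ k) (hp : p ∈ S.atom k r) : S.τ j p = S.τ j r :=
  S.eq_of_agreeUpTo j r p ((S.mem_atom.1 hp).symm.mono (S.τ_mono hj r))

lemma atom_eq_of_mem (hp : p ∈ S.atom k r) : S.atom k p = S.atom k r := by
  ext p'
  rw [mem_atom, mem_atom, S.τ_eq_of_mem_atom le_rfl hp]
  exact ⟨fun h => h.trans (S.mem_atom.1 hp), fun h => h.trans (S.mem_atom.1 hp).symm⟩

lemma atom_subset (h : j ≤ k) : S.atom k r ⊆ S.atom j r :=
  fun _ hp => S.mem_atom.2 ((S.mem_atom.1 hp).mono (S.τ_mono h r))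

lemma atom_zero (r : CoinPath n) : S.atom 0 r = Finset.univ := by
  refine Finset.eq_univ_of_forall fun p => S.mem_atom.2 fun i hi => ?_
  have := (Finset.mem_Icc.1 i.2).1
  rw [S.zero] at hi
  omega

lemma atom_of_le (h : n ≤ k) (r : CoinPath n) : S.atom k r = {r} := by
  ext p
  rw [mem_atom, S.τ_of_le h, Finset.mem_singleton]
  exact ⟨AgreeUpTo.eq, fun hp => hp ▸ fun _ _ => rfl⟩

lemma atom_succ_of_τ_eq (h : S.τ (k + 1) r = S.τ k r) : S.atom (k + 1) r = S.atom k r := by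
  simp only [atom, h]

/-- `τ_{k+1}` cannot stop at `τ_k` on part of an atom of level `k` only. -/
lemma τ_succ_eq_of_le (hp : p ∈ S.atom k r) (h : S.τ (k + 1) p ≤ S.τ k r) :
    S.τ (k + 1) r = S.τ (k + 1) p :=
  S.eq_of_agreeUpTo (k + 1) p r ((S.mem_atom.1 hp).mono h)

lemma τ_succ_of_mem_atom_of_τ_eq (hr : S.τ (k + 1) r = S.τ k r) (hp : p ∈ S.atom k r) :
    S.τ (k + 1) p = S.τ k r := by
  have hr' : r ∈ S.atom k p := S.atom_eq_of_mem hp ▸ S.self_mem_atom k r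
  rw [S.τ_succ_eq_of_le hr' (by rw [hr, S.τ_eq_of_mem_atom le_rfl hp]), hr]

lemma lt_τ_succ_of_mem_atom (hr : S.τ k r < S.τ (k + 1) r) (hp : p ∈ S.atom k r) :
    S.τ k r < S.τ (k + 1) p := by
  by_contra! h
  exact absurd (S.τ_succ_eq_of_le hp h) (by omega)

lemma pad_mem_atom (k : ℕ) (r : CoinPath n) (v : Bool) : pad (S.τ k r) v r ∈ S.atom k r :=
  S.mem_atom.2 (agreeUpTo_pad _ v r)

lemma pad_eq_of_mem_atom (hp : p ∈ S.atom k r) (v : Bool) :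
    pad (S.τ k p) v p = pad (S.τ k r) v r := by
  funext i
  simp only [pad, S.τ_eq_of_mem_atom le_rfl hp]
  split_ifs with hi
  · exact S.mem_atom.1 hp i hi
  · rfl

/-- The paths of the atom of `r` at level `k` that run constantly `v` up to `τ_{k+1}`. -/
def branch (k : ℕ) (r : CoinPath n) (v : Bool) : Finset (CoinPath n) :=
  S.atom (k + 1) (pad (S.τ k r) v r)

lemma branch_subset (v : Bool) : S.branch k r v ⊆ S.atom k r :=
  (S.atom_subset k.le_succ).trans (S.atom_eq_of_mem (S.pad_mem_atom k r v)).le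

lemma τ_succ_of_mem_branch {v : Bool} (hp : p ∈ S.branch k r v) :
    S.τ (k + 1) p = S.τ (k + 1) (pad (S.τ k r) v r) :=
  S.τ_eq_of_mem_atom le_rfl hp

lemma mem_branch_iff (hp : p ∈ S.atom k r) {v : Bool} :
    p ∈ S.branch k r v ↔ RunsOn (S.τ k r) (S.τ (k + 1) p) v p := by
  constructor
  · intro hb i h₁ h₂
    rw [S.τ_succ_of_mem_branch hb] at h₂
    rw [(S.mem_atom.1 hb) i h₂, pad, if_neg h₁.not_ge]
  · intro hrun
    have hagree : AgreeUpTo (S.τ (k + 1) p) p (pad (S.τ k r) v r) := by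
      intro i hi
      rw [pad]
      split_ifs with h
      · exact S.mem_atom.1 hp i h
      · exact hrun i (not_le.1 h) hi
    rw [branch, mem_atom, S.eq_of_agreeUpTo (k + 1) p _ hagree]
    exact hagree

lemma sum_atom_eq_sum_branch {M : Type*} [AddCommMonoid M] (hr : S.τ k r < S.τ (k + 1) r)
    {g : CoinPath n → M}
    (hg : ∀ p ∈ S.atom k r, (∀ v, ¬ RunsOn (S.τ k r) (S.τ (k + 1) p) v p) → g p = 0) :
    ∑ p ∈ S.atom k r, g p = ∑ v, ∑ p ∈ S.branch k r v, g p := by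
  have hfilter (v : Bool) :
      S.branch k r v = {p ∈ S.atom k r | RunsOn (S.τ k r) (S.τ (k + 1) p) v p} := by
    ext p
    rw [Finset.mem_filter]
    exact ⟨fun hp => ⟨S.branch_subset v hp, (S.mem_branch_iff (S.branch_subset v hp)).1 hp⟩,
      fun h => (S.mem_branch_iff h.1).2 h.2⟩
  simp_rw [hfilter, Finset.sum_filter]
  rw [Finset.sum_comm]
  refine Finset.sum_congr rfl fun p hp => ?_
  have hlt := S.lt_τ_succ_of_mem_atom hr hp
  rw [Fintype.sum_bool]
  by_cases ht : RunsOn (S.τ k r) (S.τ (k + 1) p) true p <;>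
    by_cases hf : RunsOn (S.τ k r) (S.τ (k + 1) p) false p
  · exact absurd (eq_of_runsOn hlt (S.le_n _ p) ht hf) (by decide)
  · rw [if_pos ht, if_neg hf, add_zero]
  · rw [if_neg ht, if_pos hf, zero_add]
  · rw [if_neg ht, if_neg hf, add_zero, hg p hp fun v => by cases v <;> assumption]

variable (σ s₀ : ℝ)

noncomputable def stoppedPrice (k : ℕ) (p : CoinPath n) : ℝ :=
  binSd n σ s₀ (S.τ k p) (lift n p)

/-- The factor by which the price moves from `τ_k` to `τ_{k+1}` along the branch `v` at `r`. -/
noncomputable def branchFactor (k : ℕ) (r : CoinPath n) (v : Bool) : ℝ :=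
  Real.exp (σ / √n *
    (((S.τ (k + 1) (pad (S.τ k r) v r) - S.τ k r : ℕ) : ℝ) * if v then 1 else -1))

noncomputable def stepWeight (k : ℕ) (p : CoinPath n) : ℝ :=
  if S.τ (k + 1) p = S.τ k p then 1
  else ∑ v, if RunsOn (S.τ k p) (S.τ (k + 1) p) v p
    then martingaleProb (S.branchFactor σ k p) v else 0

noncomputable def weight (p : CoinPath n) : ℝ :=
  ∏ j ∈ Finset.range n, S.stepWeight σ j p

def HasMonotoneRuns (p : CoinPath n) : Prop :=
  ∀ k, ∃ v, RunsOn (S.τ k p) (S.τ (k + 1) p) v p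

/-- `m` is the law of the first `n` tosses under a measure as in `IsQMeasure`; the martingale
property is tested on the atoms of `𝓕_{τ_k}`. -/
structure IsMartingaleWeight (m : CoinPath n → ℝ) : Prop where
  sum_eq_one : ∑ p, m p = 1
  eq_zero_of_not_hasMonotoneRuns : ∀ p, ¬ S.HasMonotoneRuns p → m p = 0
  sum_mul_stoppedPrice_succ : ∀ k r, ∑ p ∈ S.atom k r, m p * S.stoppedPrice σ s₀ (k + 1) p =
    ∑ p ∈ S.atom k r, m p * S.stoppedPrice σ s₀ k p

variable {S σ s₀}

lemma stoppedPrice_eq_of_mem_atom (hp : p ∈ S.atom k r) :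
    S.stoppedPrice σ s₀ k p = S.stoppedPrice σ s₀ k r := by
  rw [stoppedPrice, S.τ_eq_of_mem_atom le_rfl hp]
  exact binSd_lift_congr σ s₀ (S.mem_atom.1 hp) le_rfl

lemma stoppedPrice_succ_of_mem_atom_of_τ_eq (hr : S.τ (k + 1) r = S.τ k r)
    (hp : p ∈ S.atom k r) : S.stoppedPrice σ s₀ (k + 1) p = S.stoppedPrice σ s₀ k r := by
  rw [stoppedPrice, S.τ_succ_of_mem_atom_of_τ_eq hr hp]
  exact binSd_lift_congr σ s₀ (S.mem_atom.1 hp) le_rfl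

lemma stoppedPrice_succ_of_mem_branch {v : Bool} (hp : p ∈ S.branch k r v) :
    S.stoppedPrice σ s₀ (k + 1) p = S.stoppedPrice σ s₀ k r * S.branchFactor σ k r v := by
  have hpa := S.branch_subset v hp
  have hrun := (S.mem_branch_iff hpa).1 hp
  have hle : S.τ k r ≤ S.τ (k + 1) p :=
    S.τ_eq_of_mem_atom le_rfl hpa ▸ S.mono k p
  rw [stoppedPrice, binSd_lift_of_runsOn σ s₀ hrun hle (S.le_n _ p),
    binSd_lift_congr σ s₀ (S.mem_atom.1 hpa) le_rfl, branchFactor, ← S.τ_succ_of_mem_branch hp]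
  rfl

lemma branchFactor_eq_of_mem_atom (hp : p ∈ S.atom k r) :
    S.branchFactor σ k p = S.branchFactor σ k r := by
  funext v
  rw [branchFactor, branchFactor, S.pad_eq_of_mem_atom hp, S.τ_eq_of_mem_atom le_rfl hp]

lemma branchFactor_false_lt_one_lt_true (hσ : 0 < σ) (hr : S.τ k r < S.τ (k + 1) r) :
    S.branchFactor σ k r false < 1 ∧ 1 < S.branchFactor σ k r true := by
  have hc : 0 < σ / √n := div_pos hσ (Real.sqrt_pos.2 (
    Nat.cast_pos.2 (Nat.zero_lt_of_lt (hr.trans_le (S.le_n _ r)))))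
  have hlen (v : Bool) : (0 : ℝ) < ((S.τ (k + 1) (pad (S.τ k r) v r) - S.τ k r : ℕ) : ℝ) := by
    have := S.lt_τ_succ_of_mem_atom hr (S.pad_mem_atom k r v)
    exact_mod_cast Nat.sub_pos_of_lt this
  simp only [branchFactor, Bool.false_eq_true, if_false, if_true, mul_one, mul_neg_one,
    Real.exp_lt_one_iff, Real.one_lt_exp_iff]
  exact ⟨by nlinarith [hlen false], by nlinarith [hlen true]⟩

lemma stepWeight_of_τ_eq (h : S.τ (k + 1) p = S.τ k p) : S.stepWeight σ k p = 1 :=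
  if_pos h

lemma stepWeight_of_mem_branch (hr : S.τ k r < S.τ (k + 1) r) {v : Bool}
    (hp : p ∈ S.branch k r v) :
    S.stepWeight σ k p = martingaleProb (S.branchFactor σ k r) v := by
  have hpa := S.branch_subset v hp
  have hlt := S.lt_τ_succ_of_mem_atom hr hpa
  have hrun := (S.mem_branch_iff hpa).1 hp
  rw [← S.τ_eq_of_mem_atom le_rfl hpa] at hlt hrun
  rw [stepWeight, if_neg hlt.ne', Finset.sum_eq_single v
    (fun v' _ hv' => if_neg fun h => hv' (eq_of_runsOn hlt (S.le_n _ p) h hrun))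
    (by simp), if_pos hrun, branchFactor_eq_of_mem_atom hpa]

lemma stepWeight_eq_zero (hr : S.τ k r < S.τ (k + 1) r) (hp : p ∈ S.atom k r)
    (h : ∀ v, ¬ RunsOn (S.τ k r) (S.τ (k + 1) p) v p) : S.stepWeight σ k p = 0 := by
  have hlt := S.lt_τ_succ_of_mem_atom hr hp
  rw [← S.τ_eq_of_mem_atom le_rfl hp] at hlt h
  rw [stepWeight, if_neg hlt.ne']
  exact Finset.sum_eq_zero fun v _ => if_neg (h v)

lemma stepWeight_nonneg (hσ : 0 < σ) (k : ℕ) (p : CoinPath n) : 0 ≤ S.stepWeight σ k p := by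
  rw [stepWeight]
  split_ifs with h
  · exact zero_le_one
  have hp : S.τ k p < S.τ (k + 1) p := lt_of_le_of_ne (S.mono k p) (Ne.symm h)
  obtain ⟨h₀, h₁⟩ := branchFactor_false_lt_one_lt_true hσ hp
  refine Finset.sum_nonneg fun v _ => ?_
  split_ifs
  · exact martingaleProb_nonneg h₀.le h₁.le (h₀.trans h₁) v
  · exact le_rfl

lemma weight_nonneg (hσ : 0 < σ) (p : CoinPath n) : 0 ≤ S.weight σ p :=
  Finset.prod_nonneg fun j _ => stepWeight_nonneg hσ j p

lemma stepWeight_eq_of_mem_atom (hj : j < k) (hp : p ∈ S.atom k r) :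
    S.stepWeight σ j p = S.stepWeight σ j r := by
  have hagree : AgreeUpTo (S.τ (j + 1) r) p r := (S.mem_atom.1 hp).mono (S.τ_mono hj r)
  simp only [stepWeight, S.τ_eq_of_mem_atom hj.le hp, S.τ_eq_of_mem_atom hj hp,
    runsOn_congr hagree, branchFactor_eq_of_mem_atom (S.atom_subset hj.le hp)]

lemma sum_atom_stepWeight_mul (hr : S.τ k r < S.τ (k + 1) r) (g : CoinPath n → ℝ) :
    ∑ p ∈ S.atom k r, S.stepWeight σ k p * g p =
      ∑ v, martingaleProb (S.branchFactor σ k r) v * ∑ p ∈ S.branch k r v, g p := by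
  rw [S.sum_atom_eq_sum_branch hr fun p hp h => by rw [stepWeight_eq_zero hr hp h, zero_mul]]
  refine Finset.sum_congr rfl fun v _ => ?_
  rw [Finset.mul_sum]
  exact Finset.sum_congr rfl fun p hp => by rw [stepWeight_of_mem_branch hr hp]

lemma stepWeight_of_mem_atom_of_τ_eq (hr : S.τ (k + 1) r = S.τ k r) (hp : p ∈ S.atom k r) :
    S.stepWeight σ k p = 1 :=
  stepWeight_of_τ_eq (by rw [S.τ_succ_of_mem_atom_of_τ_eq hr hp, S.τ_eq_of_mem_atom le_rfl hp])

lemma sum_prod_stepWeight (hσ : 0 < σ) (k : ℕ) (r : CoinPath n) :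
    ∑ p ∈ S.atom k r, ∏ j ∈ Finset.Ico k n, S.stepWeight σ j p = 1 := by
  rcases le_or_gt n k with hk | hk
  · rw [S.atom_of_le hk, Finset.sum_singleton, Finset.Ico_eq_empty_of_le hk, Finset.prod_empty]
  have ih := sum_prod_stepWeight hσ (k + 1)
  simp_rw [Finset.prod_eq_prod_Ico_succ_bot hk]
  by_cases hr : S.τ (k + 1) r = S.τ k r
  · rw [← ih r, S.atom_succ_of_τ_eq hr]
    exact Finset.sum_congr rfl fun p hp => by rw [stepWeight_of_mem_atom_of_τ_eq hr hp, one_mul]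
  have hr' := lt_of_le_of_ne (S.mono k r) (Ne.symm hr)
  obtain ⟨h₀, h₁⟩ := branchFactor_false_lt_one_lt_true hσ hr'
  rw [sum_atom_stepWeight_mul hr']
  simp_rw [branch, ih, mul_one]
  exact sum_martingaleProb (h₀.trans h₁).ne
termination_by n - k

lemma sum_prod_stepWeight_mul_stoppedPrice_succ (hσ : 0 < σ) (k : ℕ) (r : CoinPath n) :
    ∑ p ∈ S.atom k r,
        (∏ j ∈ Finset.Ico k n, S.stepWeight σ j p) * S.stoppedPrice σ s₀ (k + 1) p =
      S.stoppedPrice σ s₀ k r := by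
  by_cases hr : S.τ (k + 1) r = S.τ k r
  · rw [Finset.sum_congr rfl fun p hp => by rw [stoppedPrice_succ_of_mem_atom_of_τ_eq hr hp],
      ← Finset.sum_mul, sum_prod_stepWeight hσ, one_mul]
  have hr' := lt_of_le_of_ne (S.mono k r) (Ne.symm hr)
  have hk : k < n := by
    by_contra! hk
    exact hr (by rw [S.τ_of_le hk, S.τ_of_le (hk.trans k.le_succ)])
  obtain ⟨h₀, h₁⟩ := branchFactor_false_lt_one_lt_true hσ hr'
  simp_rw [Finset.prod_eq_prod_Ico_succ_bot hk, mul_assoc]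
  rw [sum_atom_stepWeight_mul hr']
  calc ∑ v, martingaleProb (S.branchFactor σ k r) v * ∑ p ∈ S.branch k r v,
        (∏ j ∈ Finset.Ico (k + 1) n, S.stepWeight σ j p) * S.stoppedPrice σ s₀ (k + 1) p
      = ∑ v, martingaleProb (S.branchFactor σ k r) v *
          (S.stoppedPrice σ s₀ k r * S.branchFactor σ k r v) := by
        refine Finset.sum_congr rfl fun v _ => ?_
        rw [Finset.sum_congr rfl fun p hp => by rw [stoppedPrice_succ_of_mem_branch hp],
          ← Finset.sum_mul, branch, sum_prod_stepWeight hσ, one_mul]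
    _ = S.stoppedPrice σ s₀ k r := by
        simp_rw [mul_left_comm _ (S.stoppedPrice σ s₀ k r)]
        rw [← Finset.mul_sum, sum_martingaleProb_mul (h₀.trans h₁).ne, mul_one]

lemma weight_eq_of_mem_atom (hk : k ≤ n) (hp : p ∈ S.atom k r) :
    S.weight σ p =
      (∏ j ∈ Finset.range k, S.stepWeight σ j r) * ∏ j ∈ Finset.Ico k n, S.stepWeight σ j p := by
  rw [weight, ← Finset.prod_range_mul_prod_Ico _ hk]
  congr 1
  exact Finset.prod_congr rfl fun j hj => stepWeight_eq_of_mem_atom (Finset.mem_range.1 hj) hp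

lemma weight_eq_zero_of_not_hasMonotoneRuns (h : ¬ S.HasMonotoneRuns p) : S.weight σ p = 0 := by
  obtain ⟨k, hk⟩ : ∃ k, ∀ v, ¬ RunsOn (S.τ k p) (S.τ (k + 1) p) v p := by
    simpa [HasMonotoneRuns] using h
  have hlt : S.τ k p < S.τ (k + 1) p := by
    by_contra! hle
    exact hk true (runsOn_of_le _ _ hle)
  have hkn : k < n := by
    by_contra! hkn
    rw [S.τ_of_le hkn, S.τ_of_le (hkn.trans k.le_succ)] at hlt
    exact lt_irrefl _ hlt
  exact Finset.prod_eq_zero (Finset.mem_range.2 hkn)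
    (stepWeight_eq_zero hlt (S.self_mem_atom k p) hk)

lemma sum_weight (hσ : 0 < σ) : ∑ p, S.weight σ p = 1 := by
  have h := sum_prod_stepWeight (S := S) hσ 0 (fun _ => false)
  rwa [S.atom_zero, ← Finset.range_eq_Ico] at h

lemma sum_atom_weight_mul_stoppedPrice_succ (hσ : 0 < σ) (k : ℕ) (r : CoinPath n) :
    ∑ p ∈ S.atom k r, S.weight σ p * S.stoppedPrice σ s₀ (k + 1) p =
      ∑ p ∈ S.atom k r, S.weight σ p * S.stoppedPrice σ s₀ k p := by
  rcases le_or_gt n k with hk | hk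
  · simp only [stoppedPrice, S.τ_of_le hk, S.τ_of_le (hk.trans k.le_succ)]
  set W := ∏ j ∈ Finset.range k, S.stepWeight σ j r
  calc ∑ p ∈ S.atom k r, S.weight σ p * S.stoppedPrice σ s₀ (k + 1) p
      = W * ∑ p ∈ S.atom k r,
          (∏ j ∈ Finset.Ico k n, S.stepWeight σ j p) * S.stoppedPrice σ s₀ (k + 1) p := by
        rw [Finset.mul_sum]
        exact Finset.sum_congr rfl fun p hp => by rw [weight_eq_of_mem_atom hk.le hp, mul_assoc]
    _ = W * S.stoppedPrice σ s₀ k r *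
          ∑ p ∈ S.atom k r, ∏ j ∈ Finset.Ico k n, S.stepWeight σ j p := by
        rw [sum_prod_stepWeight_mul_stoppedPrice_succ hσ, sum_prod_stepWeight hσ, mul_one]
    _ = ∑ p ∈ S.atom k r, S.weight σ p * S.stoppedPrice σ s₀ k p := by
        rw [Finset.mul_sum]
        refine Finset.sum_congr rfl fun p hp => ?_
        rw [weight_eq_of_mem_atom hk.le hp, stoppedPrice_eq_of_mem_atom hp]
        ring

lemma isMartingaleWeight_weight (hσ : 0 < σ) : S.IsMartingaleWeight σ s₀ (S.weight σ) :=
  ⟨sum_weight hσ, fun _ => weight_eq_zero_of_not_hasMonotoneRuns,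
    sum_atom_weight_mul_stoppedPrice_succ hσ⟩

lemma not_hasMonotoneRuns_of_mem_atom_succ (h : ∀ v, ¬ RunsOn (S.τ k r) (S.τ (k + 1) r) v r)
    (hp : p ∈ S.atom (k + 1) r) : ¬ S.HasMonotoneRuns p := by
  intro hruns
  obtain ⟨v, hv⟩ := hruns k
  rw [S.τ_eq_of_mem_atom k.le_succ hp, S.τ_eq_of_mem_atom le_rfl hp,
    runsOn_congr (S.mem_atom.1 hp)] at hv
  exact h v hv

namespace IsMartingaleWeight

variable {m : CoinPath n → ℝ} (hm : S.IsMartingaleWeight σ s₀ m)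
include hm

lemma eq_zero_of_not_runsOn (hp : p ∈ S.atom k r)
    (h : ∀ v, ¬ RunsOn (S.τ k r) (S.τ (k + 1) p) v p) : m p = 0 :=
  hm.eq_zero_of_not_hasMonotoneRuns p fun hruns => by
    obtain ⟨v, hv⟩ := hruns k
    rw [S.τ_eq_of_mem_atom le_rfl hp] at hv
    exact h v hv

lemma sum_branch_eq (hσ : 0 < σ) (hs₀ : s₀ ≠ 0) (hr : S.τ k r < S.τ (k + 1) r) (v : Bool) :
    ∑ p ∈ S.branch k r v, m p =
      martingaleProb (S.branchFactor σ k r) v * ∑ p ∈ S.atom k r, m p := by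
  obtain ⟨h₀, h₁⟩ := branchFactor_false_lt_one_lt_true hσ hr
  have hprice : S.stoppedPrice σ s₀ k r ≠ 0 := mul_ne_zero hs₀ (Real.exp_pos _).ne'
  refine eq_martingaleProb_mul (h₀.trans h₁).ne
    (S.sum_atom_eq_sum_branch hr fun p hp h => hm.eq_zero_of_not_runsOn hp h).symm ?_ v
  apply mul_left_cancel₀ hprice
  calc S.stoppedPrice σ s₀ k r * ∑ v, (∑ p ∈ S.branch k r v, m p) * S.branchFactor σ k r v
      = ∑ v, ∑ p ∈ S.branch k r v, m p * S.stoppedPrice σ s₀ (k + 1) p := by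
        rw [Finset.mul_sum]
        refine Finset.sum_congr rfl fun v _ => ?_
        rw [Finset.sum_mul, Finset.mul_sum]
        exact Finset.sum_congr rfl fun p hp => by rw [stoppedPrice_succ_of_mem_branch hp]; ring
    _ = ∑ p ∈ S.atom k r, m p * S.stoppedPrice σ s₀ (k + 1) p :=
        (S.sum_atom_eq_sum_branch hr fun p hp h => by
          rw [hm.eq_zero_of_not_runsOn hp h, zero_mul]).symm
    _ = ∑ p ∈ S.atom k r, m p * S.stoppedPrice σ s₀ k p := hm.sum_mul_stoppedPrice_succ k r
    _ = S.stoppedPrice σ s₀ k r * ∑ p ∈ S.atom k r, m p := by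
        rw [Finset.mul_sum]
        exact Finset.sum_congr rfl fun p hp => by rw [stoppedPrice_eq_of_mem_atom hp, mul_comm]

lemma sum_atom_eq (hσ : 0 < σ) (hs₀ : s₀ ≠ 0) (k : ℕ) (r : CoinPath n) :
    ∑ p ∈ S.atom k r, m p = ∏ j ∈ Finset.range k, S.stepWeight σ j r := by
  induction k generalizing r with
  | zero => rw [S.atom_zero, hm.sum_eq_one, Finset.prod_range_zero]
  | succ k ih =>
    rw [Finset.prod_range_succ, ← ih r]
    by_cases hr : S.τ (k + 1) r = S.τ k r
    · rw [S.atom_succ_of_τ_eq hr, stepWeight_of_τ_eq hr, mul_one]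
    have hr' := lt_of_le_of_ne (S.mono k r) (Ne.symm hr)
    by_cases hrun : ∃ v, RunsOn (S.τ k r) (S.τ (k + 1) r) v r
    · obtain ⟨v, hv⟩ := hrun
      have hrb : r ∈ S.branch k r v := (S.mem_branch_iff (S.self_mem_atom k r)).2 hv
      rw [S.atom_eq_of_mem hrb, stepWeight_of_mem_branch hr' hrb, mul_comm]
      exact hm.sum_branch_eq hσ hs₀ hr' v
    · push Not at hrun
      rw [stepWeight_eq_zero hr' (S.self_mem_atom k r) hrun, mul_zero]
      exact Finset.sum_eq_zero fun p hp => hm.eq_zero_of_not_hasMonotoneRuns p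
        (not_hasMonotoneRuns_of_mem_atom_succ hrun hp)

lemma eq_weight (hσ : 0 < σ) (hs₀ : s₀ ≠ 0) : m = S.weight σ :=
  funext fun r => by simpa [S.atom_of_le le_rfl, weight] using hm.sum_atom_eq hσ hs₀ n r

end IsMartingaleWeight

theorem isMartingaleWeight_iff (hσ : 0 < σ) (hs₀ : s₀ ≠ 0) {m : CoinPath n → ℝ} :
    S.IsMartingaleWeight σ s₀ m ↔ m = S.weight σ :=
  ⟨fun hm => hm.eq_weight hσ hs₀, fun h => h ▸ isMartingaleWeight_weight hσ⟩

end PathStopSystem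

namespace BinStopSystem

open CoinPath PathStopSystem

variable {n : ℕ} (T : BinStopSystem n)

def toPath : PathStopSystem n where
  τ k p := T.τ k (lift n p)
  zero _ := T.zero _
  mono k _ := T.mono k _
  le_n k _ := T.le_n k _
  top _ := T.top _
  eq_of_agreeUpTo k _ _ h :=
    eq_of_isStoppingTime (T.stopping k) fun _ hi => lift_congr h.symm (Finset.mem_Icc.1 hi).2

lemma τ_eq_toPath_τ (k : ℕ) (ω : BinOmega) : T.τ k ω = T.toPath.τ k (restr n ω) :=
  (eq_of_isStoppingTime (T.stopping k) fun _ hi => lift_restr (Finset.mem_Icc.2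
    ⟨(Finset.mem_Icc.1 hi).1, (Finset.mem_Icc.1 hi).2.trans (T.le_n k ω)⟩) ω).symm

lemma binSd_τ_eq (σ s₀ : ℝ) (k : ℕ) :
    (fun ω => binSd n σ s₀ (T.τ k ω) ω) = T.toPath.stoppedPrice σ s₀ k ∘ restr n := by
  funext ω
  rw [Function.comp_apply, stoppedPrice, ← τ_eq_toPath_τ, binSd_lift_restr σ s₀ (T.le_n k ω)]

lemma monotoneRun_iff_hasMonotoneRuns (ω : BinOmega) :
    (∀ k, T.τ k ω < n → MonotoneRun (T.τ k ω) (T.τ (k + 1) ω) ω) ↔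
      T.toPath.HasMonotoneRuns (restr n ω) := by
  simp only [HasMonotoneRuns, τ_eq_toPath_τ, monotoneRun_iff (T.toPath.le_n _ _)]
  refine ⟨fun h k => ?_, fun h k _ => h k⟩
  rcases lt_or_ge (T.toPath.τ k (restr n ω)) n with hk | hk
  · exact h k hk
  · exact ⟨true, runsOn_of_le _ _ ((T.toPath.le_n _ _).trans hk)⟩

lemma ae_monotoneRun_iff (Q : Measure BinOmega) [IsFiniteMeasure Q] :
    (∀ᵐ ω ∂Q, ∀ k, T.τ k ω < n → MonotoneRun (T.τ k ω) (T.τ (k + 1) ω) ω) ↔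
      ∀ p, ¬ T.toPath.HasMonotoneRuns p → (Q.map (restr n)).real {p} = 0 := by
  simp_rw [monotoneRun_iff_hasMonotoneRuns, measureReal_eq_zero_iff (measure_ne_top _ _)]
  rw [← ae_map_iff measurable_restr.aemeasurable .of_discrete, ae_iff_of_countable]
  exact forall_congr' fun p => not_imp_comm

lemma measurableSet_preimage_atom (k : ℕ) (r : CoinPath n) :
    MeasurableSet[(T.stopping k).measurableSpace] (restr n ⁻¹' ↑(T.toPath.atom k r)) := by
  set a := T.toPath.τ k r
  have hatom : restr n ⁻¹' ↑(T.toPath.atom k r) =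
      ⋂ (i : Finset.Icc 1 n) (_ : (i : ℕ) ≤ a), (fun ω : BinOmega => ω i) ⁻¹' {r i} := by
    ext ω
    simp [mem_atom, AgreeUpTo, restr, a]
  have hmeas : MeasurableSet[coordMS a] (restr n ⁻¹' ↑(T.toPath.atom k r)) := by
    rw [hatom]
    exact .iInter fun i => .iInter fun hi => measurable_coord
      (Finset.mem_Icc.2 ⟨(Finset.mem_Icc.1 i.2).1, hi⟩) (measurableSet_singleton _)
  refine ((T.stopping k).measurableSet _).2
    ⟨le_iSup (fun t => (coordFilt t : MeasurableSpace BinOmega)) a _ hmeas, fun t => ?_⟩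
  rcases le_or_gt a t with hat | hat
  · exact (coordMS_mono hat _ hmeas).inter (T.stopping k t)
  · convert @MeasurableSet.empty _ (coordFilt t)
    refine Set.eq_empty_of_forall_notMem fun ω ⟨hω, hτ⟩ => ?_
    simp only [Set.mem_ofPred_eq, Nat.cast_withTop, WithTop.coe_le_coe, τ_eq_toPath_τ,
      T.toPath.τ_eq_of_mem_atom le_rfl hω] at hτ
    omega

lemma exists_finset_of_measurableSet {k : ℕ} {s : Set BinOmega}
    (hs : MeasurableSet[(T.stopping k).measurableSpace] s) :
    ∃ A : Finset (CoinPath n), restr n ⁻¹' ↑A = s ∧ ∀ r ∈ A, T.toPath.atom k r ⊆ A := by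
  classical
  have hsn := (T.stopping k).measurableSpace_le_of_le_const
    (fun ω => WithTop.coe_le_coe.2 (T.le_n k ω)) s hs
  obtain ⟨A, rfl⟩ := measurableSet_coordMS_iff.1 hsn
  refine ⟨A.toFinset, by rw [Set.coe_toFinset], fun r hr p hp => ?_⟩
  set a := T.toPath.τ k r
  have hsa : MeasurableSet[coordMS a] (restr n ⁻¹' A ∩ {ω | T.τ k ω ≤ a}) := by
    have := (((T.stopping k).measurableSet _).1 hs).2 a
    simp only [Nat.cast_withTop, WithTop.coe_le_coe] at this
    exact this
  have hlift := mem_of_measurableSet_coordMS hsa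
    (fun i hi => lift_congr (T.toPath.mem_atom.1 hp) (Finset.mem_Icc.1 hi).2)
    ⟨by simpa [Set.mem_toFinset] using hr, le_refl a⟩
  simpa [Set.mem_toFinset] using hlift.1

lemma measurable_binSd_τ (σ s₀ : ℝ) (k : ℕ) :
    Measurable[(T.stopping k).measurableSpace] fun ω => binSd n σ s₀ (T.τ k ω) ω :=
  measurable_stoppedValue (u := fun j => binSd n σ s₀ j)
    (StronglyAdapted.isStronglyProgressive_of_discrete fun j =>
      (measurable_binSd σ s₀ j).stronglyMeasurable) (T.stopping k)

lemma condExp_binSd_τ_ae_eq_iff (Q : Measure BinOmega) [IsFiniteMeasure Q] (σ s₀ : ℝ) (k : ℕ) :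
    Q[(fun ω => binSd n σ s₀ (T.τ (k + 1) ω) ω) | (T.stopping k).measurableSpace]
        =ᵐ[Q] (fun ω => binSd n σ s₀ (T.τ k ω) ω) ↔
      ∀ r, ∑ p ∈ T.toPath.atom k r,
          (Q.map (restr n)).real {p} * T.toPath.stoppedPrice σ s₀ (k + 1) p =
        ∑ p ∈ T.toPath.atom k r, (Q.map (restr n)).real {p} * T.toPath.stoppedPrice σ s₀ k p := by
  have hm := (T.stopping k).measurableSpace_le
  have hint (j : ℕ) : Integrable (fun ω => binSd n σ s₀ (T.τ j ω) ω) Q := by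
    rw [binSd_τ_eq]
    exact Integrable.of_finite.comp_measurable measurable_restr
  have hsum (j : ℕ) (A : Finset (CoinPath n)) :
      ∫ ω in restr n ⁻¹' ↑A, binSd n σ s₀ (T.τ j ω) ω ∂Q =
        ∑ p ∈ A, (Q.map (restr n)).real {p} * T.toPath.stoppedPrice σ s₀ j p := by
    rw [binSd_τ_eq]
    exact setIntegral_preimage_restr Q A _
  constructor
  · intro h r
    have hC := T.measurableSet_preimage_atom k r
    rw [← hsum, ← hsum, ← setIntegral_condExp hm (hint (k + 1)) hC]
    exact setIntegral_congr_ae (hm _ hC) (h.mono fun ω hω _ => hω)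
  · intro h
    refine (ae_eq_condExp_of_forall_setIntegral_eq hm (hint (k + 1))
      (fun s _ _ => (hint k).integrableOn) (fun s hs _ => ?_)
      (T.measurable_binSd_τ σ s₀ k).stronglyMeasurable.aestronglyMeasurable).symm
    obtain ⟨A, rfl, hA⟩ := T.exists_finset_of_measurableSet hs
    rw [hsum, hsum]
    exact (Finset.sum_eq_sum_of_forall_sum_class_eq _ (T.toPath.self_mem_atom k)
      (fun _ _ => T.toPath.atom_eq_of_mem) hA h).symm

theorem isQMeasure_iff {σ s₀ : ℝ} (hσ : 0 < σ) (hs₀ : s₀ ≠ 0) {P Q : Measure BinOmega}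
    [IsProbabilityMeasure Q] :
    IsQMeasure n σ s₀ P Q T ↔
      Q ≪ P ∧ (fun p => (Q.map (restr n)).real {p}) = T.toPath.weight σ := by
  rw [← isMartingaleWeight_iff hσ hs₀]
  have hsum : ∑ p, (Q.map (restr n)).real {p} = 1 := by
    rw [sum_measureReal_singleton, Finset.coe_univ, map_measureReal_apply measurable_restr .univ,
      Set.preimage_univ, probReal_univ]
  constructor
  · rintro ⟨-, hac, hruns, hmart⟩
    exact ⟨hac, hsum, (T.ae_monotoneRun_iff Q).1 hruns,
      fun k => (T.condExp_binSd_τ_ae_eq_iff Q σ s₀ k).1 (hmart k)⟩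
  · rintro ⟨hac, hm⟩
    exact ⟨‹_›, hac, (T.ae_monotoneRun_iff Q).2 hm.eq_zero_of_not_hasMonotoneRuns,
      fun k => (T.condExp_binSd_τ_ae_eq_iff Q σ s₀ k).2 (hm.sum_mul_stoppedPrice_succ k)⟩

lemma map_restr_eq_of_isQMeasure {σ s₀ : ℝ} (hσ : 0 < σ) (hs₀ : s₀ ≠ 0)
    {P Q Q' : Measure BinOmega} (hQ : IsQMeasure n σ s₀ P Q T)
    (hQ' : IsQMeasure n σ s₀ P Q' T) :
    Q.map (restr n) = Q'.map (restr n) := by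
  have := hQ.1
  have := hQ'.1
  have h := ((T.isQMeasure_iff hσ hs₀).1 hQ).2.trans ((T.isQMeasure_iff hσ hs₀).1 hQ').2.symm
  exact Measure.ext_iff_singleton.2 fun p =>
    (ENNReal.toReal_eq_toReal_iff' (measure_ne_top _ _) (measure_ne_top _ _)).1 (congrFun h p)

/-- The density is `2ⁿ` times the weight because `P` gives every path of length `n` mass `2⁻ⁿ`. -/
noncomputable def qMeasure (P : Measure BinOmega) (σ : ℝ) : Measure BinOmega :=
  P.withDensity fun ω => ENNReal.ofReal (2 ^ n * T.toPath.weight σ (restr n ω))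

variable {T} {P : Measure BinOmega} {σ : ℝ}

lemma map_qMeasure_singleton (hP : IsFairCoin P) (p : CoinPath n) :
    (T.qMeasure P σ).map (restr n) {p} = ENNReal.ofReal (T.toPath.weight σ p) := by
  have hmeas : MeasurableSet (restr n ⁻¹' {p}) := measurable_restr (measurableSet_singleton p)
  rw [Measure.map_apply measurable_restr (measurableSet_singleton p), qMeasure,
    withDensity_apply _ hmeas, setLIntegral_congr_fun hmeas
      (g := fun _ => ENNReal.ofReal (2 ^ n * T.toPath.weight σ p))
      fun ω hω => by rw [Set.mem_preimage, Set.mem_singleton_iff] at hω; simp only [hω],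
    setLIntegral_const, measure_preimage_restr_singleton hP, ENNReal.ofReal_mul (by positivity),
    mul_comm, ← mul_assoc, ENNReal.ofReal_pow zero_le_two, ENNReal.ofReal_ofNat, ← mul_pow,
    one_div, ENNReal.inv_mul_cancel two_ne_zero ENNReal.ofNat_ne_top, one_pow, one_mul]

lemma isProbabilityMeasure_qMeasure (hP : IsFairCoin P) (hσ : 0 < σ) :
    IsProbabilityMeasure (T.qMeasure P σ) := by
  constructor
  rw [← Set.preimage_univ (f := restr n), ← Measure.map_apply measurable_restr .univ,
    ← Finset.coe_univ, ← sum_measure_singleton]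
  simp_rw [map_qMeasure_singleton hP]
  rw [← ENNReal.ofReal_sum_of_nonneg fun p _ => weight_nonneg hσ p, sum_weight hσ,
    ENNReal.ofReal_one]

lemma isQMeasure_qMeasure (hP : IsFairCoin P) {s₀ : ℝ} (hσ : 0 < σ) (hs₀ : s₀ ≠ 0) :
    IsQMeasure n σ s₀ P (T.qMeasure P σ) T := by
  have := isProbabilityMeasure_qMeasure (T := T) hP hσ
  refine (T.isQMeasure_iff hσ hs₀).2 ⟨withDensity_absolutelyContinuous _ _, funext fun p => ?_⟩
  rw [measureReal_def, map_qMeasure_singleton hP, ENNReal.toReal_ofReal (weight_nonneg hσ p)]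

end BinStopSystem

theorem existsUnique_QMeasure_general (n : ℕ) (σ s₀ : ℝ) (hσ : 0 < σ) (hs₀ : 0 < s₀)
    (P : Measure BinOmega) (hP : IsFairCoin P) (T : BinStopSystem n) :
    ∃ Q : Measure BinOmega, IsQMeasure n σ s₀ P Q T ∧
      ∀ Q' : Measure BinOmega, IsQMeasure n σ s₀ P Q' T →
        ∀ A : Set BinOmega, MeasurableSet[coordMS n] A → Q A = Q' A := by
  have hQ := T.isQMeasure_qMeasure hP hσ hs₀.ne'
  refine ⟨T.qMeasure P σ, hQ, fun Q' hQ' A hA => ?_⟩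
  obtain ⟨S, rfl⟩ := CoinPath.measurableSet_coordMS_iff.1 hA
  rw [← Measure.map_apply CoinPath.measurable_restr .of_discrete,
    T.map_restr_eq_of_isQMeasure hσ hs₀.ne' hQ hQ',
    Measure.map_apply CoinPath.measurable_restr .of_discrete]

/-- For every stopping system `𝕋 ∈ 𝒯⁽ⁿ⁾` there exists exactly one probability
measure on `σ(ζ_1, …, ζ_n)` that is absolutely continuous with respect to `P`, makes
`(S⁽ⁿ⁾_{τ_k})_{k}` a martingale with respect to `(𝓕⁽ⁿ⁾_{τ_k})_k`, and gives full measure to the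
scenarios in which, for every `k` with `τ_k < 1`, the increments between `τ_k` and `τ_{k+1}`
are all `+1` or all `−1` (also when `τ_{k+1} = 1`). -/
theorem existsUnique_QMeasure (n : ℕ) (σ s₀ : ℝ) (hn : 1 ≤ n) (hσ : 0 < σ) (hs₀ : 0 < s₀)
    (P : Measure BinOmega) (hP : IsFairCoin P) (T : BinStopSystem n) :
    ∃ Q : Measure BinOmega, IsQMeasure n σ s₀ P Q T ∧
      ∀ Q' : Measure BinOmega, IsQMeasure n σ s₀ P Q' T →
        ∀ A : Set BinOmega, MeasurableSet[coordMS n] A → Q A = Q' A :=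
  existsUnique_QMeasure_general n σ s₀ hσ hs₀ P hP T
end

section
/- Let n ≥ 1 and m ≥ 1 be integers and let 0 = s_0 < s_1 < ⋯ < s_K = n be integers. Then there exist integers 0 = u_0 < u_1 < ⋯ < u_L = n such that {s_0, …, s_K} ⊆ {u_0, …, u_L}, u_{j+1} − u_j ≤ m for all j = 0, …, L−1, and L − K ≤ ⌊(n−1)/m⌋; in other words, any integer partition of {0, …, n} can be refined to one with all gaps at most m by adding at most ⌊(n−1)/m⌋ points. -/
private lemma partition_refinement_aux (m : ℕ) (hm : 1 ≤ m) :
    ∀ (K : ℕ) (s : ℕ → ℕ), s 0 = 0 → (∀ k, k < K → s k < s (k + 1)) →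
    ∃ (L : ℕ) (u : ℕ → ℕ), u 0 = 0 ∧ u L = s K ∧
      (∀ j, j < L → u j < u (j + 1)) ∧
      (∀ k ≤ K, ∃ j ≤ L, u j = s k) ∧
      (∀ j, j < L → u (j + 1) - u j ≤ m) ∧
      K ≤ L ∧ L - K ≤ (s K - 1) / m := by
  intro K
  induction K with
  | zero =>
    intro s hs0 _
    refine ⟨0, fun _ => 0, rfl, hs0.symm, by omega,
      fun k hk => ⟨0, le_rfl, ?_⟩, by omega, le_rfl, Nat.zero_le _⟩
    interval_cases k
    exact hs0.symm
  | succ K ih =>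
    intro s hs0 hmono
    obtain ⟨L, u, hu0, huL, humono, hhit, hgap, hKL, hbound⟩ :=
      ih s hs0 (fun k hk => hmono k (by omega))
    set N := s K with hN
    set N' := s (K + 1) with hN'
    have hNN' : N < N' := hmono K (by omega)
    set d := N' - N with hd
    have hd1 : 1 ≤ d := by omega
    -- abstract the division (d-1)/m into a variable q
    obtain ⟨q, hq1, hq2⟩ : ∃ q, q * m ≤ d - 1 ∧ d - 1 < q * m + m := by
      refine ⟨(d - 1) / m, Nat.div_mul_le_self _ _, ?_⟩
      have h1 := Nat.div_add_mod' (d - 1) m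
      have h2 : (d - 1) % m < m := Nat.mod_lt _ (by omega)
      omega
    set t := q + 1 with ht
    set u' : ℕ → ℕ := fun j => if j ≤ L then u j else min (N + (j - L) * m) N' with hu'
    have key : ∀ j, L ≤ j → u' j = min (N + (j - L) * m) N' := by
      intro j hj
      rcases eq_or_lt_of_le hj with h | h
      · simp [hu', ← h, huL]; omega
      · simp [hu', Nat.not_le.mpr h]
    have hlt : ∀ i, i < t → N + i * m < N' := by
      intro i hi
      have h2 : i * m ≤ q * m := Nat.mul_le_mul_right m (by omega)
      omega
    have hend : u' (L + t) = N' := by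
      rw [key _ (by omega)]
      have h1 : L + t - L = t := by omega
      have h2 : t * m = q * m + m := by ring
      rw [h1]
      have : N' ≤ N + t * m := by omega
      exact min_eq_right this
    refine ⟨L + t, u', ?_, hend, ?_, ?_, ?_, by omega, ?_⟩
    · simp [hu', hu0]
    · intro j hj
      by_cases h : j < L
      · simpa [hu', h.le, Nat.succ_le_of_lt h] using humono j h
      · push_neg at h
        rw [key j h, key (j + 1) (by omega)]
        have hi : j - L < t := by omega
        have h1 : N + (j - L) * m < N' := hlt _ hi
        rw [min_eq_left h1.le]
        have hjl : j + 1 - L = (j - L) + 1 := by omega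
        rw [hjl]
        refine lt_min ?_ h1
        have h2 : (j - L + 1) * m = (j - L) * m + m := by ring
        omega
    · intro k hk
      rcases Nat.lt_or_ge k (K + 1) with h | h
      · obtain ⟨j, hjL, hj⟩ := hhit k (by omega)
        exact ⟨j, by omega, by simpa [hu', hjL] using hj⟩
      · have : k = K + 1 := by omega
        subst this
        exact ⟨L + t, le_rfl, hend⟩
    · intro j hj
      by_cases h : j < L
      · simpa [hu', h.le, Nat.succ_le_of_lt h] using hgap j h
      · push_neg at h
        rw [key j h, key (j + 1) (by omega)]
        have h1 : N + (j - L) * m < N' := hlt _ (by omega)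
        have hjl : j + 1 - L = (j - L) + 1 := by omega
        rw [min_eq_left h1.le, hjl]
        have hle : min (N + (j - L + 1) * m) N' ≤ N + (j - L + 1) * m := min_le_left _ _
        have h2 : (j - L + 1) * m = (j - L) * m + m := by ring
        omega
    · -- L + t - (K+1) ≤ (N'-1)/m
      obtain ⟨a, ha1, ha2⟩ : ∃ a, a * m ≤ N - 1 ∧ L - K ≤ a := by
        refine ⟨(N - 1) / m, Nat.div_mul_le_self _ _, hbound⟩
      have hkey : (L - K + q) * m ≤ N' - 1 := by
        have h3 : (L - K + q) * m = (L - K) * m + q * m := by ring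
        have h4 : (L - K) * m ≤ a * m := Nat.mul_le_mul_right m ha2
        omega
      have : L - K + q ≤ (N' - 1) / m :=
        (Nat.le_div_iff_mul_le (by omega)).mpr hkey
      omega
    
/-- Any integer partition `0 = s_0 < s_1 < ⋯ < s_K = n` of `{0, …, n}` can be
refined to a partition `0 = u_0 < u_1 < ⋯ < u_L = n` with all gaps at most `m` by adding at
most `⌊(n−1)/m⌋` points. -/
theorem partition_refinement (n m K : ℕ) (hn : 1 ≤ n) (hm : 1 ≤ m) (s : ℕ → ℕ)
    (hs0 : s 0 = 0) (hsK : s K = n) (hsmono : ∀ k, k < K → s k < s (k + 1)) :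
    ∃ (L : ℕ) (u : ℕ → ℕ), u 0 = 0 ∧ u L = n ∧
      (∀ j, j < L → u j < u (j + 1)) ∧
      (∀ k ≤ K, ∃ j ≤ L, u j = s k) ∧
      (∀ j, j < L → u (j + 1) - u j ≤ m) ∧
      L - K ≤ (n - 1) / m := by
  obtain ⟨L, u, h0, hL, h1, h2, h3, _, h4⟩ :=
    partition_refinement_aux m hm K s hs0 hsmono
  exact ⟨L, u, h0, by rwa [hsK] at hL, h1, h2, h3, by rwa [hsK] at h4⟩
end
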